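/- arXiv:1506.09168 — 2 statements merged into one kernel-verified Lean document; each statement's English description precedes it below -/
import Mathlib

section
/- Let (R,m,k) be a one-dimensional Cohen–Macaulay local ring and let x ∈ m be a non zero-divisor with ord(x) = d (i.e., x ∈ m^d \ m^{d+1}). Then the length of R/(x) satisfies λ(R/(x)) ≥ d·e(R), where e(R) is the Hilbert–Samuel multiplicity of R with respect to m. -/
open IsLocalRing

universe u v

/-- The length of a module, as the Krull dimension of its lattice of submodules. -/
noncomputable def mLength (R : Type u) (M : Type v) [CommRing R] [AddCommGroup M]
    [Module R M] : WithBot ℕ∞ :=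
  Order.krullDim (Submodule R M)

/-- The quotient `I/J` of two ideals (i.e. `I/(I ⊓ J)`), as an `R`-module. -/
abbrev idealQuot {R : Type u} [CommRing R] (I J : Ideal R) :=
  I ⧸ (Submodule.comap I.subtype J)

/-- A finitely generated module is maximal Cohen–Macaulay if it admits a regular sequence,
contained in the maximal ideal, of length equal to the Krull dimension of the ring. -/
def IsMCM (R : Type u) (M : Type v) [CommRing R] [IsLocalRing R] [AddCommGroup M]
    [Module R M] : Prop :=
  ∃ rs : List R, (∀ r ∈ rs, r ∈ maximalIdeal R) ∧ RingTheory.Sequence.IsRegular M rs ∧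
    (rs.length : WithBot ℕ∞) = ringKrullDim R

/-- A local ring is Cohen–Macaulay if it is maximal Cohen–Macaulay as a module over itself. -/
def IsCMLocalRing (R : Type u) [CommRing R] [IsLocalRing R] : Prop :=
  IsMCM R R

/-- A local ring is Gorenstein if it is Cohen–Macaulay and the socle of the quotient by any
maximal regular sequence is a one-dimensional vector space over the residue field. -/
def IsGorensteinLocalRing (R : Type u) [CommRing R] [IsLocalRing R] : Prop :=
  IsCMLocalRing R ∧ ∀ rs : List R, (∀ r ∈ rs, r ∈ maximalIdeal R) →
    RingTheory.Sequence.IsRegular R rs → (rs.length : WithBot ℕ∞) = ringKrullDim R →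
    mLength R (idealQuot ((Ideal.ofList rs).colon (maximalIdeal R)) (Ideal.ofList rs)) = 1

/-- The free rank of a module: the largest `n` such that `R^n` splits off as a direct summand. -/
noncomputable def freeRank (R : Type u) (M : Type v) [CommRing R] [AddCommGroup M]
    [Module R M] : ℕ :=
  sSup {n : ℕ | ∃ (f : M →ₗ[R] (Fin n → R)) (g : (Fin n → R) →ₗ[R] M),
    f ∘ₗ g = LinearMap.id}

/-- Auslander's delta invariant: the minimal free rank of a maximal Cohen–Macaulay module
admitting a surjection onto `M`. -/
noncomputable def auslanderDelta (R : Type u) [CommRing R] [IsLocalRing R]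
    (M : Type v) [AddCommGroup M] [Module R M] : ℕ :=
  sInf {r : ℕ | ∃ X : ModuleCat.{u} R, Module.Finite R X ∧ IsMCM R X ∧
    (∃ φ : X →ₗ[R] M, Function.Surjective φ) ∧ freeRank R X = r}

/-- The minimal number of generators of a module. -/
noncomputable def minGens (R : Type u) (M : Type v) [CommRing R] [AddCommGroup M]
    [Module R M] : ℕ :=
  sInf {n : ℕ | ∃ f : (Fin n → R) →ₗ[R] M, Function.Surjective f}

/-- The index of a local ring: the least `n` with `δ(R/m^n) = 1`. -/
noncomputable def ringIndex (R : Type u) [CommRing R] [IsLocalRing R] : ℕ∞ :=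
  sInf ((fun n : ℕ => (n : ℕ∞)) ''
    {n : ℕ | auslanderDelta R (R ⧸ (maximalIdeal R ^ n)) = 1})

/-- The generalized Löwy length of a local ring: the least `n` such that `m^n ⊆ (x₁,…,x_d)`
for some system of parameters `x₁,…,x_d`. -/
noncomputable def gll (R : Type u) [CommRing R] [IsLocalRing R] : ℕ∞ :=
  sInf ((fun n : ℕ => (n : ℕ∞)) ''
    {n : ℕ | ∃ rs : List R, (∀ r ∈ rs, r ∈ maximalIdeal R) ∧
      (rs.length : WithBot ℕ∞) = ringKrullDim R ∧
      maximalIdeal R ^ n ≤ Ideal.ofList rs})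

/-!
Since `x` is a non-zero-divisor, `λ(R/(xⁿ)) = n·λ(R/(x))`. Once `λ(mˢ/mˢ⁺¹) = e` for `s ≥ N`,
additivity of length along `m^N ⊇ m^(N+1) ⊇ ⋯` gives `λ(R/m^(N+t)) ≥ t·e`, while
`xⁿ⁺ᴺ ∈ m^(d(n+N)) ⊆ m^(N+nd)`. Hence `n·d·e ≤ (n + N)·λ(R/(x))` for every `n`,
which forces `d·e ≤ λ(R/(x))`.
-/

section Length

variable {R M : Type*} [Ring R] [AddCommGroup M] [Module R M]

theorem Submodule.length_quotient_le_of_le {N₁ N₂ : Submodule R M} (h : N₁ ≤ N₂) :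
    Module.length R (M ⧸ N₂) ≤ Module.length R (M ⧸ N₁) :=
  Module.length_le_of_surjective _ (N₁.factor_surjective h)

theorem Submodule.length_quotient_eq_add {N₁ N₂ : Submodule R M} (h : N₁ ≤ N₂) :
    Module.length R (M ⧸ N₁) =
      Module.length R (N₂ ⧸ N₁.comap N₂.subtype) + Module.length R (M ⧸ N₂) := by
  refine Module.length_eq_add_of_exact (N₁.comap N₂.subtype |>.mapQ N₁ N₂.subtype le_rfl)
    (N₁.factor h) ?_ (N₁.factor_surjective h) ?_
  · rw [← LinearMap.ker_eq_bot, Submodule.ker_mapQ]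
    simp
  · rw [LinearMap.exact_iff]
    simp [Submodule.factor, Submodule.ker_mapQ, Submodule.range_mapQ]

theorem Submodule.mul_le_length_quotient_of_antitone {F : ℕ → Submodule R M} (hF : Antitone F)
    {N e : ℕ} (he : ∀ s ≥ N, Module.length R (F s ⧸ (F (s + 1)).comap (F s).subtype) = e)
    (t : ℕ) : t * e ≤ Module.length R (M ⧸ F (N + t)) := by
  induction t with
  | zero => simp
  | succ t ih =>
    rw [← add_assoc, Submodule.length_quotient_eq_add (hF (N + t).le_succ), he _ le_self_add]
    push_cast
    rw [add_one_mul, add_comm]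
    gcongr

end Length

theorem Ring.length_quotient_pow_le_mul_ord {R : Type*} [CommRing R] {I : Ideal R} {x : R}
    (hx : x ∈ nonZeroDivisors R) {d : ℕ} (hxd : x ∈ I ^ d) (n : ℕ) :
    Module.length R (R ⧸ I ^ (d * n)) ≤ n * Ring.ord R x := by
  rw [← nsmul_eq_mul, ← Ring.ord_pow hx]
  refine Submodule.length_quotient_le_of_le ?_
  rw [Ideal.span_singleton_le_iff_mem, pow_mul]
  exact Ideal.pow_mem_pow hxd n

theorem ENat.coe_le_of_forall_mul_le_add_mul {a k : ℕ} {b : ℕ∞}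
    (h : ∀ n : ℕ, ((n * a : ℕ) : ℕ∞) ≤ (n + k) * b) : (a : ℕ∞) ≤ b := by
  induction b using ENat.recTopCoe with
  | top => exact le_top
  | coe b =>
    have hn := h (k * b + 1)
    norm_cast at hn ⊢
    by_contra! hba
    nlinarith [Nat.mul_le_mul_left (k * b + 1) hba]

theorem length_quotient_ge_ord_mul_multiplicity_general
    (R : Type u) [CommRing R] [IsLocalRing R]
    (x : R) (hx : x ∈ nonZeroDivisors R)
    (d : ℕ) (hxd : x ∈ IsLocalRing.maximalIdeal R ^ d)
    (e : ℕ)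
    (he : ∃ N : ℕ, ∀ n ≥ N,
      mLength R (idealQuot (IsLocalRing.maximalIdeal R ^ n)
        (IsLocalRing.maximalIdeal R ^ (n + 1))) = ((e : ℕ∞) : WithBot ℕ∞)) :
    (((d * e : ℕ) : ℕ∞) : WithBot ℕ∞) ≤ mLength R (R ⧸ Ideal.span {x}) := by
  obtain ⟨N, hN⟩ := he
  simp only [mLength, ← Module.coe_length, WithBot.coe_inj, WithBot.coe_le_coe] at hN ⊢
  rcases Nat.eq_zero_or_pos d with rfl | hd
  · simp
  refine ENat.coe_le_of_forall_mul_le_add_mul (k := N) fun n ↦ ?_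
  set m := IsLocalRing.maximalIdeal R
  have hm : Antitone (m ^ ·) := fun _ _ ↦ Ideal.pow_le_pow_right
  calc ((n * (d * e) : ℕ) : ℕ∞) = (n * d * e : ℕ) := by rw [mul_assoc]
    _ ≤ Module.length R (R ⧸ m ^ (N + n * d)) :=
      mod_cast Submodule.mul_le_length_quotient_of_antitone hm hN (n * d)
    _ ≤ Module.length R (R ⧸ m ^ (d * (n + N))) :=
      Submodule.length_quotient_le_of_le (hm (by nlinarith))
    _ ≤ (n + N : ℕ) * Ring.ord R x := Ring.length_quotient_pow_le_mul_ord hx hxd (n + N)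
    _ = (n + N) * Ring.ord R x := by norm_cast

/-- If `(R,m)` is a one-dimensional Cohen–Macaulay local ring and `x ∈ m`
is a non zero-divisor of order `d`, then `λ(R/(x)) ≥ d·e(R)`, where the multiplicity `e(R)`
is the eventually constant value of `n ↦ λ(mⁿ/mⁿ⁺¹)`. -/
theorem length_quotient_ge_ord_mul_multiplicity
    (R : Type u) [CommRing R] [IsLocalRing R] [IsNoetherianRing R]
    (hdim : ringKrullDim R = 1) (hCM : IsCMLocalRing R)
    (x : R) (hxm : x ∈ IsLocalRing.maximalIdeal R) (hx : x ∈ nonZeroDivisors R)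
    (d : ℕ) (hxd : x ∈ IsLocalRing.maximalIdeal R ^ d)
    (hxd' : x ∉ IsLocalRing.maximalIdeal R ^ (d + 1))
    (e : ℕ)
    (he : ∃ N : ℕ, ∀ n ≥ N,
      mLength R (idealQuot (IsLocalRing.maximalIdeal R ^ n)
        (IsLocalRing.maximalIdeal R ^ (n + 1))) = ((e : ℕ∞) : WithBot ℕ∞)) :
    (((d * e : ℕ) : ℕ∞) : WithBot ℕ∞) ≤ mLength R (R ⧸ Ideal.span {x}) :=
  length_quotient_ge_ord_mul_multiplicity_general R x hx d hxd e he
end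

section
/- Let k be a field, S = k[x,y,z] localized at (x,y,z), I = (x^2 − y^5, x y^2 + y z^3 − z^5)S, R = S/I with maximal ideal m. Then the initial ideal I* of I in P = k[X,Y,Z] equals (X^2, X Y^2, X Y Z^3, Y Z^6), and this ideal admits the primary decomposition (X^2, Y) ∩ (X, Z^6) ∩ (X^2, Y^2, Z^3). -/
/-!
Write `x, y, z` for `X 0, X 1, X 2`, and `g₀ = x² - y⁵`, `g₁ = xy² + yz³ - z⁵`. Together with
`g₂ = x g₁ - y² g₀` and `g₃ = (y³ + y²z²) g₀ + (z³ - xy - xz²) g₁` these form a standard basis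
of `J = (g₀, g₁)`: their initial forms are `x², xy², xyz³, yz⁶`, every syzygy of these monomials
is a combination of the four S-pair syzygies, and each S-pair syzygy lifts to a relation among
the `gᵢ` whose coefficients have larger order. Starting from any representation `f = ∑ aᵢ gᵢ`
one can therefore raise the order of every summand `aᵢ gᵢ` up to the order of `f`, and then
`initForm f` is a combination of the `initForm gᵢ`. Passing to the localization multiplies `f`
by some `u` with `u(0) ≠ 0`, which only rescales `initForm f`. The primary decomposition is a
computation with exponent vectors.
-/

open MvPolynomial

/-- The order of a polynomial: the least degree of a nonzero homogeneous component. -/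
noncomputable def minDeg {k : Type*} [Field k] {σ : Type*} (f : MvPolynomial σ k) : ℕ :=
  sInf {n : ℕ | homogeneousComponent n f ≠ 0}

/-- The initial form of a polynomial: its nonzero homogeneous component of least degree. -/
noncomputable def initForm {k : Type*} [Field k] {σ : Type*} (f : MvPolynomial σ k) :
    MvPolynomial σ k :=
  homogeneousComponent (minDeg f) f

namespace MvPolynomial

section Order

variable {σ R : Type*} [CommRing R] {p q : MvPolynomial σ R} {m n u v : ℕ}

-- `p ∈ 𝔪 ^ n`: every monomial of `p` has degree at least `n` (`mem_pow_idealOfVars_iff`).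
local notation "𝔪" => idealOfVars σ R

theorem mem_pow_idealOfVars_iff_homogeneousComponent :
    p ∈ 𝔪 ^ n ↔ ∀ m < n, homogeneousComponent m p = 0 := by
  rw [mem_pow_idealOfVars_iff']
  refine ⟨fun h m hm => ?_, fun h d hd => ?_⟩
  · ext d
    rw [coeff_homogeneousComponent, coeff_zero]
    split_ifs with hdm
    · exact h d (hdm ▸ hm)
    · rfl
  · simpa [coeff_homogeneousComponent] using congrArg (coeff d) (h _ hd)

theorem homogeneousComponent_eq_zero_of_mem_pow (hp : p ∈ 𝔪 ^ n) (hm : m < n) :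
    homogeneousComponent m p = 0 :=
  mem_pow_idealOfVars_iff_homogeneousComponent.1 hp m hm

theorem mem_idealOfVars_iff_constantCoeff : p ∈ 𝔪 ↔ constantCoeff p = 0 := by
  rw [← pow_one 𝔪, mem_pow_idealOfVars_iff', constantCoeff_eq]
  refine ⟨fun h => h 0 (by simp), fun h d hd => ?_⟩
  rw [Nat.lt_one_iff, Finsupp.degree_eq_zero_iff] at hd
  rwa [hd]

theorem idealOfVars_eq_ker_constantCoeff : 𝔪 = RingHom.ker constantCoeff :=
  Ideal.ext fun _ => mem_idealOfVars_iff_constantCoeff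

theorem isPrime_idealOfVars [IsDomain R] : (𝔪).IsPrime := by
  rw [idealOfVars_eq_ker_constantCoeff]
  exact RingHom.ker_isPrime _

theorem IsHomogeneous.mem_pow_idealOfVars (hp : p.IsHomogeneous n) : p ∈ 𝔪 ^ n :=
  (mem_pow_idealOfVars_iff n p).2 fun _ hd =>
    (not_not.1 fun hne => mem_support_iff.1 hd (hp.coeff_eq_zero hne)).ge

theorem mul_mem_pow_idealOfVars_of_le (hp : p ∈ 𝔪 ^ u) (hq : q ∈ 𝔪 ^ v) (h : n ≤ u + v) :
    p * q ∈ 𝔪 ^ n :=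
  Ideal.pow_le_pow_right h (pow_add 𝔪 u v ▸ Ideal.mul_mem_mul hp hq)

theorem X_pow_mem_pow_idealOfVars (i : σ) (h : n ≤ m) : (X i : MvPolynomial σ R) ^ m ∈ 𝔪 ^ n :=
  Ideal.pow_le_pow_right h (Ideal.pow_mem_pow (Ideal.subset_span (Set.mem_range_self i)) m)

theorem sub_homogeneousComponent_mem_pow (hp : p ∈ 𝔪 ^ n) :
    p - homogeneousComponent n p ∈ 𝔪 ^ (n + 1) := by
  refine mem_pow_idealOfVars_iff_homogeneousComponent.2 fun m hm => ?_
  rw [map_sub, homogeneousComponent_of_mem (homogeneousComponent_mem n p)]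
  rcases (Nat.lt_succ_iff.1 hm).lt_or_eq with hmn | rfl
  · rw [homogeneousComponent_eq_zero_of_mem_pow hp hmn, if_neg hmn.ne, sub_zero]
  · rw [if_pos rfl, sub_self]

theorem homogeneousComponent_eq_of_sub_mem_pow (hq : q.IsHomogeneous n)
    (h : p - q ∈ 𝔪 ^ (n + 1)) : homogeneousComponent n p = q := by
  have := homogeneousComponent_eq_zero_of_mem_pow h n.lt_succ_self
  rwa [map_sub, homogeneousComponent_of_mem ((mem_homogeneousSubmodule n q).2 hq), if_pos rfl,
    sub_eq_zero] at this

theorem homogeneousComponent_add_mul (hp : p ∈ 𝔪 ^ u) (hq : q ∈ 𝔪 ^ v) :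
    homogeneousComponent (u + v) (p * q) =
      homogeneousComponent u p * homogeneousComponent v q := by
  refine homogeneousComponent_eq_of_sub_mem_pow
    ((homogeneousComponent_isHomogeneous u p).mul (homogeneousComponent_isHomogeneous v q)) ?_
  rw [show p * q - homogeneousComponent u p * homogeneousComponent v q =
    (p - homogeneousComponent u p) * q + homogeneousComponent u p * (q - homogeneousComponent v q)
    by ring]
  exact add_mem (mul_mem_pow_idealOfVars_of_le (sub_homogeneousComponent_mem_pow hp) hq (by omega))
    (mul_mem_pow_idealOfVars_of_le (homogeneousComponent_isHomogeneous u p).mem_pow_idealOfVars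
      (sub_homogeneousComponent_mem_pow hq) (by omega))

end Order

section InitialForm

variable {σ k : Type*} [Field k] {p q : MvPolynomial σ k} {n : ℕ}

local notation "𝔪" => idealOfVars σ k

theorem mem_pow_minDeg (p : MvPolynomial σ k) : p ∈ 𝔪 ^ minDeg p :=
  mem_pow_idealOfVars_iff_homogeneousComponent.2 fun _ hm => not_not.1 (Nat.notMem_of_lt_sInf hm)

theorem initForm_ne_zero (hp : p ≠ 0) : initForm p ≠ 0 := by
  obtain ⟨d, hd⟩ := ne_zero_iff.1 hp
  refine Nat.sInf_mem (s := {n | homogeneousComponent n p ≠ 0}) ⟨d.degree, fun h => hd ?_⟩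
  simpa [coeff_homogeneousComponent] using congrArg (coeff d) h

theorem minDeg_eq_of_sub_mem_pow (hq : q.IsHomogeneous n) (hq0 : q ≠ 0)
    (h : p - q ∈ 𝔪 ^ (n + 1)) : minDeg p = n := by
  have hpq := homogeneousComponent_eq_of_sub_mem_pow hq h
  have hp0 : p ≠ 0 := fun hp => hq0 (by rw [← hpq, hp, map_zero])
  have hp : p ∈ 𝔪 ^ n := by
    simpa using add_mem (Ideal.pow_le_pow_right n.le_succ h) hq.mem_pow_idealOfVars
  exact le_antisymm (Nat.sInf_le (hpq ▸ hq0 : homogeneousComponent n p ≠ 0))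
    (le_of_not_gt fun hlt => initForm_ne_zero hp0 (homogeneousComponent_eq_zero_of_mem_pow hp hlt))

theorem initForm_eq_of_sub_mem_pow (hq : q.IsHomogeneous n) (hq0 : q ≠ 0)
    (h : p - q ∈ 𝔪 ^ (n + 1)) : initForm p = q := by
  rw [initForm, minDeg_eq_of_sub_mem_pow hq hq0 h, homogeneousComponent_eq_of_sub_mem_pow hq h]

theorem initForm_mul_of_constantCoeff_ne_zero {u : MvPolynomial σ k} (hu : constantCoeff u ≠ 0)
    (hp : p ≠ 0) : initForm (u * p) = C (constantCoeff u) * initForm p := by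
  refine initForm_eq_of_sub_mem_pow ((homogeneousComponent_isHomogeneous _ p).C_mul _)
    (mul_ne_zero (C_ne_zero.2 hu) (initForm_ne_zero hp)) ?_
  rw [show u * p - C (constantCoeff u) * initForm p =
    (u - C (constantCoeff u)) * p + C (constantCoeff u) * (p - initForm p) by ring]
  refine add_mem (mul_mem_pow_idealOfVars_of_le (u := 1) ?_ (mem_pow_minDeg p) (by omega))
    (Ideal.mul_mem_left _ _ (sub_homogeneousComponent_mem_pow (mem_pow_minDeg p)))
  rw [pow_one, mem_idealOfVars_iff_constantCoeff]
  simp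

end InitialForm

section Division

variable {σ R : Type*} [CommRing R] {p : MvPolynomial σ R} {n : ℕ}

local notation "𝔪" => idealOfVars σ R

theorem mem_span_X_image_of_X_mul_mem {V : Set σ} {j : σ} (hj : j ∉ V)
    (h : X j * p ∈ Ideal.span (X '' V : Set (MvPolynomial σ R))) :
    p ∈ Ideal.span (X '' V : Set (MvPolynomial σ R)) := by
  rw [mem_ideal_span_X_image] at h ⊢
  intro d hd
  obtain ⟨i, hi, hne⟩ := h (Finsupp.single j 1 + d)
    (by rw [mem_support_iff, coeff_X_mul]; exact mem_support_iff.1 hd)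
  refine ⟨i, hi, ?_⟩
  rwa [Finsupp.add_apply, Finsupp.single_eq_of_ne (ne_of_mem_of_not_mem hi hj), zero_add] at hne

theorem mem_span_X_image_of_X_pow_mul_mem {V : Set σ} {j : σ} (hj : j ∉ V) (e : ℕ)
    (h : X j ^ e * p ∈ Ideal.span (X '' V : Set (MvPolynomial σ R))) :
    p ∈ Ideal.span (X '' V : Set (MvPolynomial σ R)) := by
  induction e with
  | zero => simpa using h
  | succ e ih => exact ih (mem_span_X_image_of_X_mul_mem hj (by rwa [← mul_assoc, ← pow_succ']))

theorem divMonomial_mem_pow (hp : p ∈ 𝔪 ^ n) (s : σ →₀ ℕ) :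
    p.divMonomial s ∈ 𝔪 ^ (n - s.degree) := by
  refine (mem_pow_idealOfVars_iff' _ _).2 fun d hd => ?_
  rw [coeff_divMonomial]
  exact (mem_pow_idealOfVars_iff' _ _).1 hp _ (by rw [map_add]; omega)

theorem modMonomial_mem_pow (hp : p ∈ 𝔪 ^ n) (s : σ →₀ ℕ) : p.modMonomial s ∈ 𝔪 ^ n := by
  refine (mem_pow_idealOfVars_iff' _ _).2 fun d hd => ?_
  by_cases hs : s ≤ d
  · exact coeff_modMonomial_of_le _ hs
  · rw [coeff_modMonomial_of_not_le _ hs]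
    exact (mem_pow_idealOfVars_iff' _ _).1 hp _ hd

theorem exists_eq_X_mul_of_mem_pow {i : σ} (hi : p ∈ Ideal.span {X i}) (hp : p ∈ 𝔪 ^ n) :
    ∃ a ∈ 𝔪 ^ (n - 1), p = X i * a := by
  refine ⟨p.divMonomial (Finsupp.single i 1), by
    simpa using divMonomial_mem_pow hp (Finsupp.single i 1), ?_⟩
  have := divMonomial_add_modMonomial_single p i
  rwa [X_dvd_iff_modMonomial_eq_zero.1 (Ideal.mem_span_singleton.1 hi), add_zero, eq_comm] at this

theorem exists_eq_X_mul_add_X_mul_of_mem_pow {i j : σ} (h : p ∈ Ideal.span {X i, X j})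
    (hp : p ∈ 𝔪 ^ n) : ∃ a ∈ 𝔪 ^ (n - 1), ∃ b ∈ 𝔪 ^ (n - 1), p = X i * a + X j * b := by
  set r := p.modMonomial (Finsupp.single i 1)
  have hr : r ∈ Ideal.span {X j} := by
    rw [← Set.image_singleton, mem_ideal_span_X_image]
    intro d hd
    have hdi : ¬ Finsupp.single i 1 ≤ d := fun hle =>
      mem_support_iff.1 hd (coeff_modMonomial_of_le _ hle)
    rw [mem_support_iff, coeff_modMonomial_of_not_le _ hdi, ← mem_support_iff] at hd
    rw [← Set.image_pair, mem_ideal_span_X_image] at h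
    obtain ⟨l, hl, hdl⟩ := h d hd
    rcases hl with rfl | rfl
    · exact absurd (Finsupp.single_le_iff.2 (Nat.one_le_iff_ne_zero.2 hdl)) hdi
    · exact ⟨l, rfl, hdl⟩
  obtain ⟨b, hb, hrb⟩ := exists_eq_X_mul_of_mem_pow hr (modMonomial_mem_pow hp _)
  refine ⟨_, by simpa using divMonomial_mem_pow hp (Finsupp.single i 1), b, hb, ?_⟩
  rw [← hrb]
  exact (divMonomial_add_modMonomial_single p i).symm

end Division

section StandardBasis

variable {σ k ι : Type*} [Field k] [Fintype ι] {f : MvPolynomial σ k} {t : ℕ}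

local notation "𝔪" => idealOfVars σ k

/-- `f = ∑ aᵢ gᵢ` with every summand `aᵢ gᵢ` of order at least `t`. -/
def HasRepOfOrder (g : ι → MvPolynomial σ k) (f : MvPolynomial σ k) (t : ℕ) : Prop :=
  ∃ a : ι → MvPolynomial σ k, f = ∑ i, a i * g i ∧ ∀ i, a i ∈ 𝔪 ^ (t - minDeg (g i))

/-- The hypothesis of the standard basis criterion. -/
def SyzygiesLift (g : ι → MvPolynomial σ k) : Prop :=
  ∀ (t : ℕ) (h : ι → MvPolynomial σ k), ∑ i, h i * initForm (g i) = 0 →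
    (∀ i, h i ∈ 𝔪 ^ (t - minDeg (g i))) → HasRepOfOrder g (∑ i, h i * g i) (t + 1)

theorem homogeneousComponent_mul_of_mem_pow_sub_minDeg {a g : MvPolynomial σ k}
    (ha : a ∈ 𝔪 ^ (t - minDeg g)) :
    homogeneousComponent t (a * g) =
      (if minDeg g ≤ t then homogeneousComponent (t - minDeg g) a else 0) * initForm g := by
  split_ifs with hg
  · rw [initForm, ← homogeneousComponent_add_mul ha (mem_pow_minDeg g), Nat.sub_add_cancel hg]
  · rw [zero_mul]
    exact homogeneousComponent_eq_zero_of_mem_pow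
      (Ideal.mul_mem_left _ a (mem_pow_minDeg g)) (not_le.1 hg)

variable {g : ι → MvPolynomial σ k}

theorem HasRepOfOrder.succ (hg : SyzygiesLift g) (hf : HasRepOfOrder g f t)
    (ht : f ∈ 𝔪 ^ (t + 1)) : HasRepOfOrder g f (t + 1) := by
  obtain ⟨a, rfl, ha⟩ := hf
  -- The degree-`t` parts `hᵢ * initForm gᵢ` of the summands cancel, since `f ∈ 𝔪 ^ (t + 1)`.
  set h : ι → MvPolynomial σ k := fun i =>
    if minDeg (g i) ≤ t then homogeneousComponent (t - minDeg (g i)) (a i) else 0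
  have hsyz : ∑ i, h i * initForm (g i) = 0 := by
    rw [← homogeneousComponent_eq_zero_of_mem_pow ht t.lt_succ_self, map_sum]
    exact Finset.sum_congr rfl fun i _ =>
      (homogeneousComponent_mul_of_mem_pow_sub_minDeg (ha i)).symm
  have hh : ∀ i, h i ∈ 𝔪 ^ (t - minDeg (g i)) := fun i => by
    by_cases hi : minDeg (g i) ≤ t
    · simpa [h, hi] using (homogeneousComponent_isHomogeneous _ (a i)).mem_pow_idealOfVars
    · simp [h, hi]
  obtain ⟨c, hc, hc_mem⟩ := hg t h hsyz hh
  refine ⟨fun i => a i - h i + c i, ?_, fun i => add_mem ?_ (hc_mem i)⟩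
  · simp only [add_mul, sub_mul, Finset.sum_add_distrib, Finset.sum_sub_distrib, ← hc]
    ring
  · by_cases hi : minDeg (g i) ≤ t
    · simpa [h, hi, Nat.sub_add_comm hi] using sub_homogeneousComponent_mem_pow (ha i)
    · simp [h, show t + 1 - minDeg (g i) = 0 by omega]

theorem hasRepOfOrder_of_mem_pow (hg : SyzygiesLift g) (hf : f ∈ Ideal.span (Set.range g)) :
    ∀ t, f ∈ 𝔪 ^ t → HasRepOfOrder g f t
  | 0, _ => by
    obtain ⟨a, ha⟩ := Ideal.mem_span_range_iff_exists_fun.1 hf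
    exact ⟨a, ha.symm, fun i => by simp⟩
  | t + 1, ht =>
    (hasRepOfOrder_of_mem_pow hg hf t (Ideal.pow_le_pow_right t.le_succ ht)).succ hg ht

theorem initForm_mem_span_of_syzygiesLift (hg : SyzygiesLift g)
    (hf : f ∈ Ideal.span (Set.range g)) :
    initForm f ∈ Ideal.span (Set.range fun i => initForm (g i)) := by
  obtain ⟨a, hfa, ha⟩ := hasRepOfOrder_of_mem_pow hg hf _ (mem_pow_minDeg f)
  rw [initForm, show homogeneousComponent (minDeg f) f =
    ∑ i, homogeneousComponent (minDeg f) (a i * g i) by rw [← map_sum, ← hfa]]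
  exact Ideal.sum_mem _ fun i _ => by
    rw [homogeneousComponent_mul_of_mem_pow_sub_minDeg (ha i)]
    exact Ideal.mul_mem_left _ _ (Ideal.subset_span (Set.mem_range_self i))

theorem span_initForm_image_eq_of_syzygiesLift (hg : SyzygiesLift g) :
    Ideal.span (initForm '' (Ideal.span (Set.range g) : Set (MvPolynomial σ k))) =
      Ideal.span (Set.range fun i => initForm (g i)) :=
  le_antisymm
    (Ideal.span_le.2 <| by rintro _ ⟨f, hf, rfl⟩; exact initForm_mem_span_of_syzygiesLift hg hf)
    (Ideal.span_mono <| Set.range_subset_iff.2 fun i =>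
      ⟨g i, Ideal.subset_span (Set.mem_range_self i), rfl⟩)

end StandardBasis

theorem span_initForm_of_algebraMap_mem_map {σ k S : Type*} [Field k] [CommRing S]
    [Algebra (MvPolynomial σ k) S] {M : Submonoid (MvPolynomial σ k)} [IsLocalization M S]
    (hM : ∀ u ∈ M, constantCoeff u ≠ 0) (J : Ideal (MvPolynomial σ k)) :
    Ideal.span {g | ∃ f, f ≠ 0 ∧ algebraMap _ S f ∈ J.map (algebraMap _ S) ∧ g = initForm f} =
      Ideal.span (initForm '' (J : Set (MvPolynomial σ k))) := by
  refine le_antisymm (Ideal.span_le.2 ?_) (Ideal.span_le.2 ?_)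
  · rintro _ ⟨f, hf, hfJ, rfl⟩
    obtain ⟨u, hu, huf⟩ := (IsLocalization.algebraMap_mem_map_algebraMap_iff M S J f).1 hfJ
    have hc := hM u hu
    rw [show initForm f = C (constantCoeff u)⁻¹ * initForm (u * f) by
      rw [initForm_mul_of_constantCoeff_ne_zero hc hf, ← mul_assoc, ← C_mul, inv_mul_cancel₀ hc,
        C_1, one_mul]]
    exact Ideal.mul_mem_left _ _ (Ideal.subset_span ⟨u * f, huf, rfl⟩)
  · rintro _ ⟨f, hf, rfl⟩
    rcases eq_or_ne f 0 with rfl | hf0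
    · simp [initForm]
    · exact Ideal.subset_span ⟨f, hf0, Ideal.mem_map_of_mem _ hf, rfl⟩

end MvPolynomial

section Example

variable (k : Type*) [Field k]

local notation "𝔪" => idealOfVars (Fin 3) k

noncomputable def standardBasis : Fin 4 → MvPolynomial (Fin 3) k :=
  ![X 0 ^ 2 - X 1 ^ 5, X 0 * X 1 ^ 2 + X 1 * X 2 ^ 3 - X 2 ^ 5,
    X 0 * X 1 * X 2 ^ 3 - X 0 * X 2 ^ 5 + X 1 ^ 7,
    X 1 * X 2 ^ 6 - X 2 ^ 8 + X 0 * X 2 ^ 7 - X 1 ^ 8 - X 1 ^ 7 * X 2 ^ 2]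

noncomputable def standardBasisInitForm : Fin 4 → MvPolynomial (Fin 3) k :=
  ![X 0 ^ 2, X 0 * X 1 ^ 2, X 0 * X 1 * X 2 ^ 3, X 1 * X 2 ^ 6]

theorem standardBasisInitForm_isHomogeneous :
    ∀ i, (standardBasisInitForm k i).IsHomogeneous (![2, 3, 5, 7] i) := by
  intro i
  fin_cases i
  · exact isHomogeneous_X_pow 0 2
  · exact (isHomogeneous_X k 0).mul (isHomogeneous_X_pow 1 2)
  · exact ((isHomogeneous_X k 0).mul (isHomogeneous_X k 1)).mul (isHomogeneous_X_pow 2 3)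
  · exact (isHomogeneous_X k 1).mul (isHomogeneous_X_pow 2 6)

theorem standardBasisInitForm_ne_zero : ∀ i, standardBasisInitForm k i ≠ 0 := by
  intro i
  fin_cases i <;> simp [standardBasisInitForm, X_ne_zero]

theorem standardBasis_sub_standardBasisInitForm_mem :
    ∀ i, standardBasis k i - standardBasisInitForm k i ∈ 𝔪 ^ (![2, 3, 5, 7] i + 1) := by
  have hmonomial (i j : Fin 3) (a b : ℕ) {n : ℕ} (h : n ≤ a + b) :
      (X i ^ a * X j ^ b : MvPolynomial (Fin 3) k) ∈ 𝔪 ^ n :=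
    mul_mem_pow_idealOfVars_of_le (X_pow_mem_pow_idealOfVars i le_rfl)
      (X_pow_mem_pow_idealOfVars j le_rfl) h
  intro i
  fin_cases i <;> simp only [standardBasis, standardBasisInitForm, Fin.zero_eta, Fin.mk_one,
    Fin.reduceFinMk, Matrix.cons_val]
  · convert neg_mem (X_pow_mem_pow_idealOfVars (σ := Fin 3) (R := k) 1 (show 3 ≤ 5 by norm_num))
      using 1
    ring
  · convert sub_mem (hmonomial 1 2 1 3 le_rfl) (X_pow_mem_pow_idealOfVars 2 (show 4 ≤ 5 by norm_num))
      using 1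
    ring
  · convert sub_mem (X_pow_mem_pow_idealOfVars 1 (show 6 ≤ 7 by norm_num)) (hmonomial 0 2 1 5 le_rfl)
      using 1
    ring
  · convert sub_mem (sub_mem (sub_mem (hmonomial 0 2 1 7 le_rfl) (X_pow_mem_pow_idealOfVars 2 le_rfl))
      (X_pow_mem_pow_idealOfVars 1 le_rfl)) (hmonomial 1 2 7 2 (by norm_num)) using 1
    ring

theorem minDeg_standardBasis (i : Fin 4) : minDeg (standardBasis k i) = ![2, 3, 5, 7] i :=
  minDeg_eq_of_sub_mem_pow (standardBasisInitForm_isHomogeneous k i)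
    (standardBasisInitForm_ne_zero k i) (standardBasis_sub_standardBasisInitForm_mem k i)

theorem initForm_standardBasis (i : Fin 4) :
    initForm (standardBasis k i) = standardBasisInitForm k i :=
  initForm_eq_of_sub_mem_pow (standardBasisInitForm_isHomogeneous k i)
    (standardBasisInitForm_ne_zero k i) (standardBasis_sub_standardBasisInitForm_mem k i)

theorem span_range_standardBasis :
    Ideal.span (Set.range (standardBasis k)) =
      Ideal.span {X 0 ^ 2 - X 1 ^ 5, X 0 * X 1 ^ 2 + X 1 * X 2 ^ 3 - X 2 ^ 5} := by
  refine le_antisymm (Ideal.span_le.2 <| Set.range_subset_iff.2 fun i => ?_)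
    (Ideal.span_le.2 <| Set.insert_subset_iff.2 ⟨Ideal.subset_span ⟨0, rfl⟩,
      Set.singleton_subset_iff.2 (Ideal.subset_span ⟨1, rfl⟩)⟩)
  rw [SetLike.mem_coe, Ideal.mem_span_pair]
  fin_cases i
  · exact ⟨1, 0, by simp [standardBasis]⟩
  · exact ⟨0, 1, by simp [standardBasis]⟩
  · exact ⟨-X 1 ^ 2, X 0, by simp only [standardBasis, Fin.reduceFinMk, Matrix.cons_val]; ring⟩
  · exact ⟨X 1 ^ 3 + X 1 ^ 2 * X 2 ^ 2, X 2 ^ 3 - X 0 * X 1 - X 0 * X 2 ^ 2, by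
      simp only [standardBasis, Fin.reduceFinMk, Matrix.cons_val]; ring⟩

theorem range_standardBasisInitForm : Set.range (standardBasisInitForm k) =
    {X 0 ^ 2, X 0 * X 1 ^ 2, X 0 * X 1 * X 2 ^ 3, X 1 * X 2 ^ 6} := by
  simp only [standardBasisInitForm, Matrix.range_cons, Matrix.range_empty, Set.union_empty,
    Set.singleton_union]

theorem mem_span_X_zero_X_one_of_eq_zero {h₀ h₁ h₂ : MvPolynomial (Fin 3) k}
    (h : h₀ * X 0 + h₁ * X 1 ^ 2 + h₂ * (X 1 * X 2 ^ 3) = 0) : h₂ ∈ Ideal.span {X 0, X 1} := by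
  have h₁₂ : X 1 * (h₁ * X 1 + X 2 ^ 3 * h₂) ∈ Ideal.span (X '' {0}) := by
    rw [Set.image_singleton]
    exact Ideal.mem_span_singleton'.2 ⟨-h₀, by linear_combination -h⟩
  have h₂' : X 2 ^ 3 * h₂ ∈ Ideal.span (X '' {0, 1}) := by
    have := Ideal.span_mono (Set.image_mono (Set.singleton_subset_iff.2 (Set.mem_insert 0 {1})))
      (mem_span_X_image_of_X_mul_mem (by simp) h₁₂)
    simpa using sub_mem this (Ideal.mul_mem_left _ h₁ (Ideal.subset_span ⟨1, by simp, rfl⟩))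
  simpa [Set.image_pair] using mem_span_X_image_of_X_pow_mul_mem (by simp) 3 h₂'

/-- The syzygies of `x², xy², xyz³, yz⁶` are generated by the four S-pair syzygies
`(y², -x, 0, 0)`, `(yz³, 0, -x, 0)`, `(0, z³, -y, 0)` and `(0, 0, z³, -x)`. -/
theorem exists_syzygy_decomposition {t : ℕ} {h₀ h₁ h₂ h₃ : MvPolynomial (Fin 3) k}
    (hsyz : h₀ * X 0 ^ 2 + h₁ * (X 0 * X 1 ^ 2) + h₂ * (X 0 * X 1 * X 2 ^ 3) +
      h₃ * (X 1 * X 2 ^ 6) = 0)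
    (h₁_mem : h₁ ∈ 𝔪 ^ (t - 3)) (h₂_mem : h₂ ∈ 𝔪 ^ (t - 5)) (h₃_mem : h₃ ∈ 𝔪 ^ (t - 7)) :
    ∃ r ∈ 𝔪 ^ (t - 8), ∃ p ∈ 𝔪 ^ (t - 6), ∃ q ∈ 𝔪 ^ (t - 6), ∃ w ∈ 𝔪 ^ (t - 4),
      h₀ = -(w * X 1 ^ 2) - p * (X 1 * X 2 ^ 3) ∧ h₁ = X 0 * w - q * X 2 ^ 3 ∧
      h₂ = X 0 * p + X 1 * q - r * X 2 ^ 3 ∧ h₃ = X 0 * r := by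
  have hA : h₃ ∈ Ideal.span {X 0} := by
    have : X 1 * (X 2 ^ 6 * h₃) ∈ Ideal.span (X '' {0}) := by
      rw [Set.image_singleton]
      exact Ideal.mem_span_singleton'.2
        ⟨-(h₀ * X 0 + h₁ * X 1 ^ 2 + h₂ * X 1 * X 2 ^ 3), by linear_combination -hsyz⟩
    simpa using mem_span_X_image_of_X_pow_mul_mem (by simp) 6
      (mem_span_X_image_of_X_mul_mem (by simp) this)
  obtain ⟨r, hr, rfl⟩ := exists_eq_X_mul_of_mem_pow hA h₃_mem
  set h₂' := h₂ + r * X 2 ^ 3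
  have h₂'_mem : h₂' ∈ 𝔪 ^ (t - 5) := add_mem h₂_mem
    (mul_mem_pow_idealOfVars_of_le hr (X_pow_mem_pow_idealOfVars 2 le_rfl) (by omega))
  have hsyz' : h₀ * X 0 + h₁ * X 1 ^ 2 + h₂' * (X 1 * X 2 ^ 3) = 0 := by
    refine (mul_eq_zero.1 ?_).resolve_left (X_ne_zero (0 : Fin 3))
    linear_combination hsyz
  obtain ⟨p, hp, q, hq, hpq⟩ :=
    exists_eq_X_mul_add_X_mul_of_mem_pow (mem_span_X_zero_X_one_of_eq_zero k hsyz') h₂'_mem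
  set h₁' := h₁ + q * X 2 ^ 3
  have h₁'_mem : h₁' ∈ 𝔪 ^ (t - 3) := add_mem h₁_mem
    (mul_mem_pow_idealOfVars_of_le hq (X_pow_mem_pow_idealOfVars 2 le_rfl) (by omega))
  have hsyz'' : X 0 * (h₀ + p * (X 1 * X 2 ^ 3)) + X 1 ^ 2 * h₁' = 0 := by
    linear_combination hsyz' - X 1 * X 2 ^ 3 * hpq
  have hC : h₁' ∈ Ideal.span {X 0} := by
    have : X 1 ^ 2 * h₁' ∈ Ideal.span (X '' {0}) := by
      rw [Set.image_singleton]
      exact Ideal.mem_span_singleton'.2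
        ⟨-(h₀ + p * (X 1 * X 2 ^ 3)), by linear_combination -hsyz''⟩
    simpa using mem_span_X_image_of_X_pow_mul_mem (by simp) 2 this
  obtain ⟨w, hw, hw_eq⟩ := exists_eq_X_mul_of_mem_pow hC h₁'_mem
  refine ⟨r, by simpa [Nat.sub_sub] using hr, p, by simpa [Nat.sub_sub] using hp,
    q, by simpa [Nat.sub_sub] using hq, w, by simpa [Nat.sub_sub] using hw,
    ?_, by linear_combination hw_eq, by linear_combination hpq, rfl⟩
  have : X 0 * (h₀ + p * (X 1 * X 2 ^ 3) + w * X 1 ^ 2) = 0 := by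
    linear_combination hsyz'' - X 1 ^ 2 * hw_eq
  linear_combination (mul_eq_zero.1 this).resolve_left (X_ne_zero _)

theorem syzygiesLift_standardBasis : SyzygiesLift (standardBasis k) := by
  intro t h hsyz hh
  simp only [Fin.sum_univ_four, initForm_standardBasis] at hsyz
  simp only [minDeg_standardBasis] at hh
  obtain ⟨r, hr, p, hp, q, hq, w, hw, e₀, e₁, e₂, e₃⟩ :=
    exists_syzygy_decomposition k hsyz (hh 1) (hh 2) (hh 3)
  -- The S-pair syzygies lift by `y² g₀ - x g₁ = -g₂`, `yz³ g₀ - x g₂ = z⁵ g₀ - y⁵ g₁`,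
  -- `z³ g₁ - y g₂ = g₃ + z² g₂` and `z³ g₂ - x g₃ = -z⁷ g₀ + (y⁶ + y⁵z²) g₁`.
  refine ⟨![r * X 2 ^ 7 - p * X 2 ^ 5, p * X 1 ^ 5 - r * X 1 ^ 6 - r * (X 1 ^ 5 * X 2 ^ 2),
    w - q * X 2 ^ 2, -q], ?_, fun i => ?_⟩
  · simp only [Fin.sum_univ_four, standardBasis, Matrix.cons_val_zero, Matrix.cons_val_one,
      Matrix.cons_val_two, Matrix.cons_val_three, Matrix.head_cons, Matrix.tail_cons]
    rw [e₀, e₁, e₂, e₃]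
    ring
  · have hX (j : Fin 3) (e : ℕ) : (X j : MvPolynomial (Fin 3) k) ^ e ∈ 𝔪 ^ e :=
      X_pow_mem_pow_idealOfVars j le_rfl
    rw [minDeg_standardBasis]
    fin_cases i
    · show r * X 2 ^ 7 - p * X 2 ^ 5 ∈ 𝔪 ^ (t + 1 - 2)
      exact sub_mem (mul_mem_pow_idealOfVars_of_le hr (hX 2 7) (by omega))
        (mul_mem_pow_idealOfVars_of_le hp (hX 2 5) (by omega))
    · show p * X 1 ^ 5 - r * X 1 ^ 6 - r * (X 1 ^ 5 * X 2 ^ 2) ∈ 𝔪 ^ (t + 1 - 3)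
      refine sub_mem (sub_mem (mul_mem_pow_idealOfVars_of_le hp (hX 1 5) (by omega))
        (mul_mem_pow_idealOfVars_of_le hr (hX 1 6) (by omega))) ?_
      exact mul_mem_pow_idealOfVars_of_le hr
        (mul_mem_pow_idealOfVars_of_le (hX 1 5) (hX 2 2) le_rfl) (by omega)
    · show w - q * X 2 ^ 2 ∈ 𝔪 ^ (t + 1 - 5)
      exact sub_mem (Ideal.pow_le_pow_right (by omega) hw)
        (mul_mem_pow_idealOfVars_of_le hq (hX 2 2) (by omega))
    · show -q ∈ 𝔪 ^ (t + 1 - 7)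
      exact neg_mem (Ideal.pow_le_pow_right (by omega) hq)

theorem span_initMonomials_eq_inf :
    (Ideal.span {X 0 ^ 2, X 0 * X 1 ^ 2, X 0 * X 1 * X 2 ^ 3, X 1 * X 2 ^ 6} :
      Ideal (MvPolynomial (Fin 3) k)) =
      Ideal.span {X 0 ^ 2, X 1} ⊓ Ideal.span {X 0, X 2 ^ 6} ⊓
        Ideal.span {X 0 ^ 2, X 1 ^ 2, X 2 ^ 3} := by
  open Finsupp in
  rw [show ({X 0 ^ 2, X 0 * X 1 ^ 2, X 0 * X 1 * X 2 ^ 3, X 1 * X 2 ^ 6} :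
        Set (MvPolynomial (Fin 3) k)) = (monomial · 1) '' {single 0 2, single 0 1 + single 1 2,
          single 0 1 + single 1 1 + single 2 3, single 1 1 + single 2 6} by
      simp only [Set.image_insert_eq, Set.image_singleton, X_pow_eq_monomial]
      simp only [X, monomial_mul, one_mul],
    show ({X 0 ^ 2, X 1} : Set (MvPolynomial (Fin 3) k)) =
        (monomial · 1) '' {single 0 2, single 1 1} by
      simp only [Set.image_insert_eq, Set.image_singleton, X_pow_eq_monomial]; rfl,
    show ({X 0, X 2 ^ 6} : Set (MvPolynomial (Fin 3) k)) =
        (monomial · 1) '' {single 0 1, single 2 6} by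
      simp only [Set.image_insert_eq, Set.image_singleton, X_pow_eq_monomial]; rfl,
    show ({X 0 ^ 2, X 1 ^ 2, X 2 ^ 3} : Set (MvPolynomial (Fin 3) k)) =
        (monomial · 1) '' {single 0 2, single 1 2, single 2 3} by
      simp only [Set.image_insert_eq, Set.image_singleton, X_pow_eq_monomial]]
  ext p
  simp only [Submodule.mem_inf, mem_ideal_span_monomial_image, ← forall₂_and]
  refine forall₂_congr fun d _ => ?_
  simp only [Set.mem_insert_iff, Set.mem_singleton_iff, Finsupp.le_def, Fin.forall_fin_succ,
    Fin.succ_zero_eq_one, Fin.succ_one_eq_two, IsEmpty.forall_iff, and_true, exists_eq_or_imp,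
    Finsupp.single_eq_same, ne_eq, one_ne_zero, not_false_eq_true, Finsupp.single_eq_of_ne,
    zero_le, Fin.reduceEq, and_self, Finsupp.coe_add, Pi.add_apply, zero_ne_one, add_zero,
    zero_add, ↓existsAndEq, true_and]
  omega

end Example

/-- Let `S = k[x,y,z]` localized at `(x,y,z)`,
`I = (x² − y⁵, xy² + yz³ − z⁵)S`. Then the initial ideal `I*` in `P = k[X,Y,Z]` equals
`(X², XY², XYZ³, YZ⁶) = (X²,Y) ∩ (X,Z⁶) ∩ (X²,Y²,Z³)` (here `x = X 0`, `y = X 1`, `z = X 2`). -/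
theorem initial_ideal_eq (k : Type*) [Field k] :
    ∃ hP : (Ideal.span {X 0, X 1, X 2} : Ideal (MvPolynomial (Fin 3) k)).IsPrime,
      letI := hP
      let T := MvPolynomial (Fin 3) k
      let S := Localization.AtPrime (Ideal.span {X 0, X 1, X 2} : Ideal T)
      let I : Ideal S := (Ideal.span {(X 0) ^ 2 - (X 1) ^ 5,
        (X 0) * (X 1) ^ 2 + (X 1) * (X 2) ^ 3 - (X 2) ^ 5}).map (algebraMap T S)
      let Istar : Ideal T :=
        Ideal.span {g : T | ∃ f : T, f ≠ 0 ∧ algebraMap T S f ∈ I ∧ g = initForm f}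
      Istar = Ideal.span {(X 0) ^ 2, (X 0) * (X 1) ^ 2,
          (X 0) * (X 1) * (X 2) ^ 3, (X 1) * (X 2) ^ 6} ∧
        Istar = Ideal.span {(X 0) ^ 2, X 1} ⊓ Ideal.span {X 0, (X 2) ^ 6} ⊓
          Ideal.span {(X 0) ^ 2, (X 1) ^ 2, (X 2) ^ 3} := by
  have hvars : (Ideal.span {X 0, X 1, X 2} : Ideal (MvPolynomial (Fin 3) k)) =
      idealOfVars (Fin 3) k := by
    congr 1
    ext
    simp [Fin.exists_fin_succ, eq_comm]
  have hP : (Ideal.span {X 0, X 1, X 2} : Ideal (MvPolynomial (Fin 3) k)).IsPrime :=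
    hvars ▸ isPrime_idealOfVars
  refine ⟨hP, ?_⟩
  intro T S I Istar
  have hM : ∀ u ∈ (Ideal.span {X 0, X 1, X 2} : Ideal T).primeCompl, constantCoeff u ≠ 0 :=
    fun u hu => by rwa [Ideal.mem_primeCompl_iff, hvars, mem_idealOfVars_iff_constantCoeff] at hu
  have hIstar : Istar =
      Ideal.span {X 0 ^ 2, X 0 * X 1 ^ 2, X 0 * X 1 * X 2 ^ 3, X 1 * X 2 ^ 6} := by
    refine (span_initForm_of_algebraMap_mem_map (S := S) hM _).trans ?_
    rw [← span_range_standardBasis, span_initForm_image_eq_of_syzygiesLift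
      (syzygiesLift_standardBasis k), funext (initForm_standardBasis k),
      range_standardBasisInitForm]
  exact ⟨hIstar, hIstar.trans (span_initMonomials_eq_inf k)⟩
end
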